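/- arXiv:2603.10316 — 3 statements merged into one kernel-verified Lean document; each statement's English description precedes it below -/
import Mathlib

section
/- For every finite simple bipartite graph G, |corona(G)| + |core(G)| = 2·α(G) and |nucleus(G)| + |diadem(G)| = 2·α(G). -/
variable {V : Type*} [Fintype V] [DecidableEq V]

/-- `S` is an independent set of `G`. -/
def IsIndep (G : SimpleGraph V) (S : Set V) : Prop :=
  ∀ ⦃u⦄, u ∈ S → ∀ ⦃v⦄, v ∈ S → ¬ G.Adj u v

/-- The independence number `α(G)`: the maximum cardinality of an independent set. -/
noncomputable def indepNum (G : SimpleGraph V) : ℕ :=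
  sSup {n : ℕ | ∃ S : Set V, IsIndep G S ∧ S.ncard = n}

/-- `S` is a maximum independent set of `G`. -/
def IsMaxIndep (G : SimpleGraph V) (S : Set V) : Prop :=
  IsIndep G S ∧ ∀ T : Set V, IsIndep G T → T.ncard ≤ S.ncard

/-- The neighborhood `N(X)` of a set of vertices `X`. -/
def nbhdSet (G : SimpleGraph V) (X : Set V) : Set V :=
  {v | ∃ u ∈ X, G.Adj u v}

/-- The difference `d_G(X) = |X| - |N(X)|` of a vertex set `X`. -/
noncomputable def diffSet (G : SimpleGraph V) (X : Set V) : ℤ :=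
  (X.ncard : ℤ) - ((nbhdSet G X).ncard : ℤ)

/-- `I` is a critical independent set of `G`. -/
def IsCriticalIndep (G : SimpleGraph V) (I : Set V) : Prop :=
  IsIndep G I ∧ ∀ J : Set V, IsIndep G J → diffSet G J ≤ diffSet G I

/-- `I` is a maximum-cardinality critical independent set of `G`. -/
def IsMaxCriticalIndep (G : SimpleGraph V) (I : Set V) : Prop :=
  IsCriticalIndep G I ∧ ∀ J : Set V, IsCriticalIndep G J → J.ncard ≤ I.ncard

/-- `core(G)`: the intersection of all maximum independent sets of `G`. -/
def coreSet (G : SimpleGraph V) : Set V := ⋂₀ {S : Set V | IsMaxIndep G S}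

/-- `corona(G)`: the union of all maximum independent sets of `G`. -/
def coronaSet (G : SimpleGraph V) : Set V := ⋃₀ {S : Set V | IsMaxIndep G S}

/-- `ker(G)`: the intersection of all critical independent sets of `G`. -/
def kerSet (G : SimpleGraph V) : Set V := ⋂₀ {S : Set V | IsCriticalIndep G S}

/-- `diadem(G)`: the union of all critical independent sets of `G`. -/
def diademSet (G : SimpleGraph V) : Set V := ⋃₀ {S : Set V | IsCriticalIndep G S}

/-- `nucleus(G)`: the intersection of all maximum-cardinality critical independent
sets of `G`. -/
def nucleusSet (G : SimpleGraph V) : Set V := ⋂₀ {S : Set V | IsMaxCriticalIndep G S}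

/-- `C` is the vertex set of some odd cycle of `G`. -/
def IsOddCycleVertexSet (G : SimpleGraph V) (C : Set V) : Prop :=
  ∃ (v : V) (w : G.Walk v v), w.IsCycle ∧ Odd w.length ∧ {x | x ∈ w.support} = C

/-- The maximum cardinality of a set of pairwise vertex-distinct odd cycles of `G`,
i.e. the number of distinct vertex sets of odd cycles of `G`. -/
noncomputable def numVertexDistinctOddCycles (G : SimpleGraph V) : ℕ :=
  {C : Set V | IsOddCycleVertexSet G C}.ncard

/-- `E` is the edge set of some odd cycle of `G`. -/
def IsOddCycleEdgeSet (G : SimpleGraph V) (E : Set (Sym2 V)) : Prop :=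
  ∃ (v : V) (w : G.Walk v v), w.IsCycle ∧ Odd w.length ∧ {e | e ∈ w.edges} = E

/-- The number of (distinct) odd cycles of `G`, where a cycle is identified with
its edge set. -/
noncomputable def numOddCycles (G : SimpleGraph V) : ℕ :=
  {E : Set (Sym2 V) | IsOddCycleEdgeSet G E}.ncard

set_option linter.unusedSectionVars false

-- ================= auxiliary development =================
section Aux

variable (G : SimpleGraph V)

lemma aux_indep_mono {S T : Set V} (h : S ⊆ T) (hT : IsIndep G T) : IsIndep G S :=
  fun _ hu _ hv => hT (h hu) (h hv)

lemma aux_bddAbove : BddAbove {n : ℕ | ∃ S : Set V, IsIndep G S ∧ S.ncard = n} := by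
  refine ⟨Fintype.card V, fun n hn => ?_⟩
  obtain ⟨S, -, rfl⟩ := hn
  simpa [Set.ncard_univ, Nat.card_eq_fintype_card] using
    Set.ncard_le_ncard (Set.subset_univ S) (Set.toFinite _)

lemma aux_ncard_le_indepNum {T : Set V} (hT : IsIndep G T) : T.ncard ≤ indepNum G :=
  le_csSup (aux_bddAbove G) ⟨T, hT, rfl⟩

lemma aux_exists_maxIndep : ∃ S : Set V, IsMaxIndep G S ∧ S.ncard = indepNum G := by
  have h0 : (0 : ℕ) ∈ {n : ℕ | ∃ S : Set V, IsIndep G S ∧ S.ncard = n} :=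
    ⟨∅, fun u hu => absurd hu (Set.notMem_empty u), by simp⟩
  obtain ⟨S, hS, hcard⟩ := Nat.sSup_mem ⟨0, h0⟩ (aux_bddAbove G)
  exact ⟨S, ⟨hS, fun T hT => hcard ▸ aux_ncard_le_indepNum G hT⟩, hcard⟩

lemma aux_maxIndep_iff {S : Set V} :
    IsMaxIndep G S ↔ IsIndep G S ∧ S.ncard = indepNum G := by
  constructor
  · rintro ⟨h1, h2⟩
    obtain ⟨S₀, hS₀, hc⟩ := aux_exists_maxIndep G
    exact ⟨h1, le_antisymm (aux_ncard_le_indepNum G h1) (hc ▸ h2 S₀ hS₀.1)⟩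
  · rintro ⟨h1, h2⟩
    exact ⟨h1, fun T hT => h2 ▸ aux_ncard_le_indepNum G hT⟩

lemma aux_mem_of_maxIndep_nonadj {S : Set V} (hS : IsMaxIndep G S) {v : V}
    (h : ∀ u ∈ S, ¬ G.Adj u v) : v ∈ S := by
  by_contra hv
  have hind : IsIndep G (insert v S) := by
    rintro u hu w hw hadj
    rcases hu with rfl | hu
    · rcases hw with rfl | hw
      · exact G.irrefl hadj
      · exact h w hw hadj.symm
    · rcases hw with rfl | hw
      · exact h u hu hadj
      · exact hS.1 hu hw hadj
  have := hS.2 _ hind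
  rw [Set.ncard_insert_of_notMem hv (Set.toFinite S)] at this
  omega

lemma aux_nbhd_mono {A B : Set V} (h : A ⊆ B) : nbhdSet G A ⊆ nbhdSet G B := by
  rintro v ⟨u, hu, hadj⟩; exact ⟨u, h hu, hadj⟩

lemma aux_indep_inter_nbhd {J : Set V} (hJ : IsIndep G J) : J ∩ nbhdSet G J = ∅ := by
  ext v; simp only [Set.mem_inter_iff, Set.mem_empty_iff_false, iff_false]
  rintro ⟨hv, u, hu, hadj⟩
  exact hJ hu hv hadj

lemma aux_maxIndep_nbhd {S : Set V} (hS : IsMaxIndep G S) :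
    nbhdSet G S = Set.univ \ S := by
  ext v
  constructor
  · rintro ⟨u, hu, hadj⟩
    refine ⟨trivial, fun hv => hS.1 hu hv hadj⟩
  · rintro ⟨-, hv⟩
    by_contra hn
    exact hv (aux_mem_of_maxIndep_nonadj G hS
      (fun u hu hadj => hn ⟨u, hu, hadj⟩))

lemma aux_maxIndep_diff {S : Set V} (hS : IsMaxIndep G S) :
    diffSet G S = 2 * (indepNum G : ℤ) - Fintype.card V := by
  have hcard : S.ncard = indepNum G := ((aux_maxIndep_iff G).mp hS).2
  have h1 : (nbhdSet G S).ncard = Fintype.card V - indepNum G := by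
    rw [aux_maxIndep_nbhd G hS, Set.ncard_diff (Set.subset_univ S), Set.ncard_univ,
      Nat.card_eq_fintype_card, hcard]
  have h2 : indepNum G ≤ Fintype.card V := by
    rw [← hcard]
    simpa [Set.ncard_univ, Nat.card_eq_fintype_card] using
      Set.ncard_le_ncard (Set.subset_univ S) (Set.toFinite _)
  unfold diffSet
  rw [hcard, h1]
  omega

end Aux

-- ============ bipartite section ============
section Bip

variable (G : SimpleGraph V) (X Y : Set V)

lemma bip_nbhd_sub_Y (hXuY : X ∪ Y = Set.univ) (hX : IsIndep G X) {A : Set V} (hA : A ⊆ X) :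
    nbhdSet G A ⊆ Y := by
  rintro v ⟨u, hu, hadj⟩
  have : v ∈ X ∪ Y := hXuY ▸ Set.mem_univ v
  rcases this with hv | hv
  · exact absurd hadj (hX (hA hu) hv)
  · exact hv

lemma bip_part_eq (T : Set V) (hXuY : X ∪ Y = Set.univ) : (T ∩ X) ∪ (T ∩ Y) = T := by
  rw [← Set.inter_union_distrib_left, hXuY, Set.inter_univ]

lemma bip_part_ncard (T : Set V) (hXuY : X ∪ Y = Set.univ) (hXiY : X ∩ Y = ∅) :
    (T ∩ X).ncard + (T ∩ Y).ncard = T.ncard := by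
  rw [← Set.ncard_union_eq ?_ (Set.toFinite _) (Set.toFinite _), bip_part_eq X Y T hXuY]
  rw [Set.disjoint_iff_inter_eq_empty]
  rw [show (T ∩ X) ∩ (T ∩ Y) = T ∩ (X ∩ Y) by ext v; simp [Set.mem_inter_iff]; tauto, hXiY,
    Set.inter_empty]

lemma bip_indep_IA (hXuY : X ∪ Y = Set.univ) (hXiY : X ∩ Y = ∅)
    (hX : IsIndep G X) (hY : IsIndep G Y) {A : Set V} (hA : A ⊆ X) :
    IsIndep G (A ∪ (Y \ nbhdSet G A)) := by
  rintro u hu w hw hadj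
  rcases hu with hu | ⟨huY, hun⟩
  · rcases hw with hw | ⟨hwY, hwn⟩
    · exact hX (hA hu) (hA hw) hadj
    · exact hwn ⟨u, hu, hadj⟩
  · rcases hw with hw | ⟨hwY, hwn⟩
    · exact hun ⟨w, hw, hadj.symm⟩
    · exact hY huY hwY hadj

lemma bip_ncard_IA (hXuY : X ∪ Y = Set.univ) (hXiY : X ∩ Y = ∅)
    (hX : IsIndep G X) {A : Set V} (hA : A ⊆ X) :
    ((A ∪ (Y \ nbhdSet G A)).ncard : ℤ) = Y.ncard + diffSet G A := by
  have hdisj : Disjoint A (Y \ nbhdSet G A) := by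
    rw [Set.disjoint_left]
    intro v hv hv2
    have : v ∈ X ∩ Y := ⟨hA hv, hv2.1⟩
    simp [hXiY] at this
  have hNY : nbhdSet G A ⊆ Y := bip_nbhd_sub_Y G X Y hXuY hX hA
  rw [Set.ncard_union_eq hdisj (Set.toFinite _) (Set.toFinite _),
    Set.ncard_diff hNY]
  have : (nbhdSet G A).ncard ≤ Y.ncard := Set.ncard_le_ncard hNY (Set.toFinite _)
  unfold diffSet
  push_cast [Nat.cast_sub this]
  ring

lemma bip_indep_sub_IA (hXuY : X ∪ Y = Set.univ) {T : Set V} (hT : IsIndep G T) :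
    T ⊆ (T ∩ X) ∪ (Y \ nbhdSet G (T ∩ X)) := by
  intro v hv
  have : v ∈ X ∪ Y := hXuY ▸ Set.mem_univ v
  rcases this with hvx | hvy
  · exact Or.inl ⟨hv, hvx⟩
  · refine Or.inr ⟨hvy, ?_⟩
    rintro ⟨u, hu, hadj⟩
    exact hT hu.1 hv hadj

lemma bip_maxIndep_eq_IA (hXuY : X ∪ Y = Set.univ) (hXiY : X ∩ Y = ∅)
    (hX : IsIndep G X) (hY : IsIndep G Y) {S : Set V} (hS : IsMaxIndep G S) :
    S = (S ∩ X) ∪ (Y \ nbhdSet G (S ∩ X)) := by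
  apply Set.Subset.antisymm (bip_indep_sub_IA G X Y hXuY hS.1)
  rintro v (hv | ⟨hvY, hvn⟩)
  · exact hv.1
  · apply aux_mem_of_maxIndep_nonadj G hS
    intro u hu hadj
    have : u ∈ X ∪ Y := hXuY ▸ Set.mem_univ u
    rcases this with hux | huy
    · exact hvn ⟨u, ⟨hu, hux⟩, hadj⟩
    · exact hY huy hvY hadj

/-- `A` is a `diffSet`-maximizer among subsets of `X`. -/
def IsMaxg (G : SimpleGraph V) (X A : Set V) : Prop :=
  A ⊆ X ∧ ∀ B ⊆ X, diffSet G B ≤ diffSet G A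

lemma bip_maxg_of_maxIndep (hXuY : X ∪ Y = Set.univ) (hXiY : X ∩ Y = ∅)
    (hX : IsIndep G X) (hY : IsIndep G Y) {S : Set V} (hS : IsMaxIndep G S) :
    IsMaxg G X (S ∩ X) := by
  refine ⟨Set.inter_subset_right, fun B hB => ?_⟩
  have h1 : ((B ∪ (Y \ nbhdSet G B)).ncard : ℤ) = Y.ncard + diffSet G B :=
    bip_ncard_IA G X Y hXuY hXiY hX hB
  have h2 : ((S ∩ X ∪ (Y \ nbhdSet G (S ∩ X))).ncard : ℤ) = Y.ncard + diffSet G (S ∩ X) :=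
    bip_ncard_IA G X Y hXuY hXiY hX Set.inter_subset_right
  rw [← bip_maxIndep_eq_IA G X Y hXuY hXiY hX hY hS] at h2
  have h3 := hS.2 _ (bip_indep_IA G X Y hXuY hXiY hX hY hB)
  have h3' : ((B ∪ (Y \ nbhdSet G B)).ncard : ℤ) ≤ (S.ncard : ℤ) := by exact_mod_cast h3
  linarith

lemma bip_maxIndep_of_maxg (hXuY : X ∪ Y = Set.univ) (hXiY : X ∩ Y = ∅)
    (hX : IsIndep G X) (hY : IsIndep G Y) {A : Set V} (hA : IsMaxg G X A) :
    IsMaxIndep G (A ∪ (Y \ nbhdSet G A)) := by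
  refine ⟨bip_indep_IA G X Y hXuY hXiY hX hY hA.1, fun T hT => ?_⟩
  have h1 : T.ncard ≤ ((T ∩ X) ∪ (Y \ nbhdSet G (T ∩ X))).ncard :=
    Set.ncard_le_ncard (bip_indep_sub_IA G X Y hXuY hT) (Set.toFinite _)
  have h2 : (((T ∩ X) ∪ (Y \ nbhdSet G (T ∩ X))).ncard : ℤ) = Y.ncard + diffSet G (T ∩ X) :=
    bip_ncard_IA G X Y hXuY hXiY hX Set.inter_subset_right
  have h3 : ((A ∪ (Y \ nbhdSet G A)).ncard : ℤ) = Y.ncard + diffSet G A :=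
    bip_ncard_IA G X Y hXuY hXiY hX hA.1
  have h4 := hA.2 (T ∩ X) Set.inter_subset_right
  have : (T.ncard : ℤ) ≤ ((A ∪ (Y \ nbhdSet G A)).ncard : ℤ) := by
    have h1' : (T.ncard : ℤ) ≤ (((T ∩ X) ∪ (Y \ nbhdSet G (T ∩ X))).ncard : ℤ) := by
      exact_mod_cast h1
    linarith
  exact_mod_cast this

lemma bip_nbhd_union (A B : Set V) : nbhdSet G (A ∪ B) = nbhdSet G A ∪ nbhdSet G B := by
  ext v
  constructor
  · rintro ⟨u, hu | hu, hadj⟩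
    · exact Or.inl ⟨u, hu, hadj⟩
    · exact Or.inr ⟨u, hu, hadj⟩
  · rintro (⟨u, hu, hadj⟩ | ⟨u, hu, hadj⟩)
    · exact ⟨u, Or.inl hu, hadj⟩
    · exact ⟨u, Or.inr hu, hadj⟩

lemma bip_maxg_union_inter {A B : Set V} (hA : IsMaxg G X A) (hB : IsMaxg G X B) :
    IsMaxg G X (A ∪ B) ∧ IsMaxg G X (A ∩ B) := by
  have hAB : A ∪ B ⊆ X := Set.union_subset hA.1 hB.1
  have hABi : A ∩ B ⊆ X := fun v hv => hA.1 hv.1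
  have hc1 : (A ∪ B).ncard + (A ∩ B).ncard = A.ncard + B.ncard :=
    Set.ncard_union_add_ncard_inter A B (Set.toFinite _) (Set.toFinite _)
  have hn1 : nbhdSet G (A ∪ B) = nbhdSet G A ∪ nbhdSet G B := bip_nbhd_union G A B
  have hn2 : nbhdSet G (A ∩ B) ⊆ nbhdSet G A ∩ nbhdSet G B := by
    rintro v ⟨u, hu, hadj⟩
    exact ⟨⟨u, hu.1, hadj⟩, ⟨u, hu.2, hadj⟩⟩
  have hc2 : (nbhdSet G (A ∪ B)).ncard + (nbhdSet G (A ∩ B)).ncard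
      ≤ (nbhdSet G A).ncard + (nbhdSet G B).ncard := by
    have := Set.ncard_union_add_ncard_inter (nbhdSet G A) (nbhdSet G B)
      (Set.toFinite _) (Set.toFinite _)
    have h2 : (nbhdSet G (A ∩ B)).ncard ≤ (nbhdSet G A ∩ nbhdSet G B).ncard :=
      Set.ncard_le_ncard hn2 (Set.toFinite _)
    rw [hn1]
    omega
  have hsuper : diffSet G A + diffSet G B ≤ diffSet G (A ∪ B) + diffSet G (A ∩ B) := by
    unfold diffSet
    have hc1' : ((A ∪ B).ncard : ℤ) + ((A ∩ B).ncard : ℤ) = (A.ncard : ℤ) + (B.ncard : ℤ) := by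
      exact_mod_cast hc1
    have hc2' : ((nbhdSet G (A ∪ B)).ncard : ℤ) + ((nbhdSet G (A ∩ B)).ncard : ℤ)
        ≤ ((nbhdSet G A).ncard : ℤ) + ((nbhdSet G B).ncard : ℤ) := by exact_mod_cast hc2
    linarith
  have hu := hA.2 _ hAB
  have hi := hA.2 _ hABi
  have hBA : diffSet G B ≤ diffSet G A := hA.2 _ hB.1
  have hAB' : diffSet G A ≤ diffSet G B := hB.2 _ hA.1
  constructor
  · exact ⟨hAB, fun C hC => by have := hA.2 _ hC; linarith⟩
  · exact ⟨hABi, fun C hC => by have := hA.2 _ hC; linarith⟩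
lemma bip_IA_inter_X (hXiY : X ∩ Y = ∅) {A : Set V} (hA : A ⊆ X) :
    (A ∪ (Y \ nbhdSet G A)) ∩ X = A := by
  ext v
  simp only [Set.mem_inter_iff, Set.mem_union, Set.mem_diff]
  constructor
  · rintro ⟨hv | ⟨hvY, -⟩, hvX⟩
    · exact hv
    · exact absurd (Set.mem_inter hvX hvY) (by simp [hXiY])
  · exact fun hv => ⟨Or.inl hv, hA hv⟩

lemma bip_IA_inter_Y (hXiY : X ∩ Y = ∅) {A : Set V} (hA : A ⊆ X) :
    (A ∪ (Y \ nbhdSet G A)) ∩ Y = Y \ nbhdSet G A := by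
  ext v
  simp only [Set.mem_inter_iff, Set.mem_union, Set.mem_diff]
  constructor
  · rintro ⟨hv | hv, hvY⟩
    · exact absurd (Set.mem_inter (hA hv) hvY) (by simp [hXiY])
    · exact hv
  · exact fun hv => ⟨Or.inr hv, hv.1⟩

lemma bip_corona_core (hXuY : X ∪ Y = Set.univ) (hXiY : X ∩ Y = ∅)
    (hX : IsIndep G X) (hY : IsIndep G Y) :
    (coronaSet G).ncard + (coreSet G).ncard = 2 * indepNum G := by
  obtain ⟨S₀, hS₀, hS₀c⟩ := aux_exists_maxIndep G
  set M := {n : ℕ | ∃ A : Set V, IsMaxg G X A ∧ A.ncard = n} with hM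
  have hMne : M.Nonempty := ⟨(S₀ ∩ X).ncard, S₀ ∩ X,
    bip_maxg_of_maxIndep G X Y hXuY hXiY hX hY hS₀, rfl⟩
  have hMbdd : BddAbove M := by
    refine ⟨Fintype.card V, fun n hn => ?_⟩
    obtain ⟨A, -, rfl⟩ := hn
    simpa [Set.ncard_univ, Nat.card_eq_fintype_card] using
      Set.ncard_le_ncard (Set.subset_univ A) (Set.toFinite _)
  obtain ⟨Amax, hAmax, hAmaxc⟩ := Nat.sSup_mem hMne hMbdd
  obtain ⟨Amin, hAmin, hAminc⟩ := Nat.sInf_mem hMne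
  have htop : ∀ B : Set V, IsMaxg G X B → B ⊆ Amax := by
    intro B hB
    have hu := (bip_maxg_union_inter G X hAmax hB).1
    have hle : (Amax ∪ B).ncard ≤ Amax.ncard := by
      rw [hAmaxc]; exact le_csSup hMbdd ⟨Amax ∪ B, hu, rfl⟩
    have := Set.eq_of_subset_of_ncard_le Set.subset_union_left hle (Set.toFinite _)
    rw [this]
    exact Set.subset_union_right
  have hbot : ∀ B : Set V, IsMaxg G X B → Amin ⊆ B := by
    intro B hB
    have hi := (bip_maxg_union_inter G X hAmin hB).2
    have hle : Amin.ncard ≤ (Amin ∩ B).ncard := by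
      rw [hAminc]; exact Nat.sInf_le ⟨Amin ∩ B, hi, rfl⟩
    have := Set.eq_of_subset_of_ncard_le Set.inter_subset_left hle (Set.toFinite _)
    intro v hv
    rw [← this] at hv
    exact hv.2
  have hSmax : IsMaxIndep G (Amax ∪ (Y \ nbhdSet G Amax)) :=
    bip_maxIndep_of_maxg G X Y hXuY hXiY hX hY hAmax
  have hSmin : IsMaxIndep G (Amin ∪ (Y \ nbhdSet G Amin)) :=
    bip_maxIndep_of_maxg G X Y hXuY hXiY hX hY hAmin
  -- the four identities
  have hSinterX : ∀ S : Set V, IsMaxIndep G S → S ∩ X = (S ∩ X) := fun _ _ => rfl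
  have hSrep : ∀ S : Set V, IsMaxIndep G S →
      S ∩ Y = Y \ nbhdSet G (S ∩ X) ∧ IsMaxg G X (S ∩ X) := by
    intro S hS
    have hmg := bip_maxg_of_maxIndep G X Y hXuY hXiY hX hY hS
    constructor
    · conv_lhs => rw [bip_maxIndep_eq_IA G X Y hXuY hXiY hX hY hS]
      exact bip_IA_inter_Y G X Y hXiY Set.inter_subset_right
    · exact hmg
  have hcorX : coronaSet G ∩ X = Amax := by
    apply Set.Subset.antisymm
    · rintro v ⟨⟨S, hS, hvS⟩, hvX⟩
      exact htop _ (hSrep S hS).2 ⟨hvS, hvX⟩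
    · intro v hv
      exact ⟨⟨_, hSmax, Or.inl hv⟩, hAmax.1 hv⟩
  have hcorY : coronaSet G ∩ Y = Y \ nbhdSet G Amin := by
    apply Set.Subset.antisymm
    · rintro v ⟨⟨S, hS, hvS⟩, hvY⟩
      have h1 : v ∈ Y \ nbhdSet G (S ∩ X) := (hSrep S hS).1 ▸ Set.mem_inter hvS hvY
      refine ⟨hvY, fun hn => h1.2 (aux_nbhd_mono G (hbot _ (hSrep S hS).2) hn)⟩
    · intro v hv
      refine ⟨⟨_, hSmin, Or.inr hv⟩, hv.1⟩
  have hcoreX : coreSet G ∩ X = Amin := by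
    apply Set.Subset.antisymm
    · rintro v ⟨hv, hvX⟩
      have hvS : v ∈ Amin ∪ (Y \ nbhdSet G Amin) := hv _ hSmin
      rcases hvS with h | h
      · exact h
      · exact absurd (Set.mem_inter hvX h.1) (by simp [hXiY])
    · intro v hv
      refine ⟨?_, hAmin.1 hv⟩
      intro S hS
      rw [Set.mem_setOf_eq] at hS
      exact Set.inter_subset_left ((hbot _ (hSrep S hS).2) hv)
  have hcoreY : coreSet G ∩ Y = Y \ nbhdSet G Amax := by
    apply Set.Subset.antisymm
    · rintro v ⟨hv, hvY⟩
      have hvS : v ∈ Amax ∪ (Y \ nbhdSet G Amax) := hv _ hSmax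
      rcases hvS with h | h
      · exact absurd (Set.mem_inter (hAmax.1 h) hvY) (by simp [hXiY])
      · exact h
    · rintro v ⟨hvY, hvn⟩
      refine Set.mem_inter ?_ hvY
      intro S hS
      rw [Set.mem_setOf_eq] at hS
      have : v ∈ Y \ nbhdSet G (S ∩ X) :=
        ⟨hvY, fun hn => hvn (aux_nbhd_mono G (htop _ (hSrep S hS).2) hn)⟩
      rw [← (hSrep S hS).1] at this
      exact this.1
  -- cardinalities
  have hNmaxY : nbhdSet G Amax ⊆ Y := bip_nbhd_sub_Y G X Y hXuY hX hAmax.1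
  have hNminY : nbhdSet G Amin ⊆ Y := bip_nbhd_sub_Y G X Y hXuY hX hAmin.1
  have hcor : ((coronaSet G).ncard : ℤ) = Amax.ncard + Y.ncard - (nbhdSet G Amin).ncard := by
    have := bip_part_ncard X Y (coronaSet G) hXuY hXiY
    rw [hcorX, hcorY, Set.ncard_diff hNminY] at this
    have hle : (nbhdSet G Amin).ncard ≤ Y.ncard := Set.ncard_le_ncard hNminY (Set.toFinite _)
    omega
  have hcore : ((coreSet G).ncard : ℤ) = Amin.ncard + Y.ncard - (nbhdSet G Amax).ncard := by
    have := bip_part_ncard X Y (coreSet G) hXuY hXiY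
    rw [hcoreX, hcoreY, Set.ncard_diff hNmaxY] at this
    have hle : (nbhdSet G Amax).ncard ≤ Y.ncard := Set.ncard_le_ncard hNmaxY (Set.toFinite _)
    omega
  have hamax : ((indepNum G : ℕ) : ℤ) = Y.ncard + diffSet G Amax := by
    have h1 := bip_ncard_IA G X Y hXuY hXiY hX hAmax.1
    have h2 : (Amax ∪ (Y \ nbhdSet G Amax)).ncard = indepNum G :=
      ((aux_maxIndep_iff G).mp hSmax).2
    rw [h2] at h1
    exact h1
  have hamin : ((indepNum G : ℕ) : ℤ) = Y.ncard + diffSet G Amin := by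
    have h1 := bip_ncard_IA G X Y hXuY hXiY hX hAmin.1
    have h2 : (Amin ∪ (Y \ nbhdSet G Amin)).ncard = indepNum G :=
      ((aux_maxIndep_iff G).mp hSmin).2
    rw [h2] at h1
    exact h1
  have hgoal : ((coronaSet G).ncard : ℤ) + ((coreSet G).ncard : ℤ) = 2 * (indepNum G : ℤ) := by
    unfold diffSet at hamax hamin
    rw [hcor, hcore]
    linarith
  exact_mod_cast hgoal

lemma bip_K_indep (hXuY : X ∪ Y = Set.univ) (hX : IsIndep G X)
    {J : Set V} (hJ : IsIndep G J) :
    IsIndep G ((X \ nbhdSet G J) ∪ (J ∩ Y)) := by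
  rintro u hu w hw hadj
  rcases hu with ⟨huX, hun⟩ | ⟨huJ, -⟩
  · rcases hw with ⟨hwX, -⟩ | ⟨hwJ, -⟩
    · exact hX huX hwX hadj
    · exact hun ⟨w, hwJ, hadj.symm⟩
  · rcases hw with ⟨-, hwn⟩ | ⟨hwJ, -⟩
    · exact hwn ⟨u, huJ, hadj⟩
    · exact hJ huJ hwJ hadj

lemma bip_K_card (hXiY : X ∩ Y = ∅) (J : Set V) :
    (((X \ nbhdSet G J) ∪ (J ∩ Y)).ncard : ℤ)
      = (X.ncard : ℤ) - ((nbhdSet G J ∩ X).ncard : ℤ) + ((J ∩ Y).ncard : ℤ) := by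
  have hdisj : Disjoint (X \ nbhdSet G J) (J ∩ Y) := by
    rw [Set.disjoint_left]
    rintro v ⟨hvX, -⟩ ⟨-, hvY⟩
    exact absurd (Set.mem_inter hvX hvY) (by simp [hXiY])
  have heq : X \ nbhdSet G J = X \ (nbhdSet G J ∩ X) := by
    ext v; simp only [Set.mem_diff, Set.mem_inter_iff]; tauto
  have hle : (nbhdSet G J ∩ X).ncard ≤ X.ncard :=
    Set.ncard_le_ncard Set.inter_subset_right (Set.toFinite _)
  rw [Set.ncard_union_eq hdisj (Set.toFinite _) (Set.toFinite _), heq,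
    Set.ncard_diff Set.inter_subset_right]
  push_cast [Nat.cast_sub hle]
  ring

lemma bip_half (hXuY : X ∪ Y = Set.univ) (hXiY : X ∩ Y = ∅) (hX : IsIndep G X)
    {J : Set V} (hJ : IsIndep G J) :
    (X.ncard : ℤ) - ((nbhdSet G J ∩ X).ncard : ℤ) + ((J ∩ Y).ncard : ℤ)
      ≤ (indepNum G : ℤ) := by
  rw [← bip_K_card G X Y hXiY J]
  exact_mod_cast aux_ncard_le_indepNum G (bip_K_indep G X Y hXuY hX hJ)

lemma bip_card_XY (hXuY : X ∪ Y = Set.univ) (hXiY : X ∩ Y = ∅) :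
    X.ncard + Y.ncard = Fintype.card V := by
  have := bip_part_ncard X Y Set.univ hXuY hXiY
  simpa [Set.ncard_univ, Nat.card_eq_fintype_card] using this

lemma bip_diff_le (hXuY : X ∪ Y = Set.univ) (hXiY : X ∩ Y = ∅)
    (hX : IsIndep G X) (hY : IsIndep G Y) {J : Set V} (hJ : IsIndep G J) :
    diffSet G J ≤ 2 * (indepNum G : ℤ) - Fintype.card V := by
  have h1 := bip_half G X Y hXuY hXiY hX hJ
  have h2 := bip_half G Y X (by rw [Set.union_comm]; exact hXuY)
    (by rw [Set.inter_comm]; exact hXiY) hY hJ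
  have h3 : (nbhdSet G J ∩ X).ncard + (nbhdSet G J ∩ Y).ncard = (nbhdSet G J).ncard :=
    bip_part_ncard X Y _ hXuY hXiY
  have h4 : (J ∩ X).ncard + (J ∩ Y).ncard = J.ncard := bip_part_ncard X Y _ hXuY hXiY
  have h5 := bip_card_XY X Y hXuY hXiY
  unfold diffSet
  have h3' : ((nbhdSet G J ∩ X).ncard : ℤ) + ((nbhdSet G J ∩ Y).ncard : ℤ)
      = ((nbhdSet G J).ncard : ℤ) := by exact_mod_cast h3
  have h4' : ((J ∩ X).ncard : ℤ) + ((J ∩ Y).ncard : ℤ) = (J.ncard : ℤ) := by exact_mod_cast h4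
  have h5' : (X.ncard : ℤ) + (Y.ncard : ℤ) = (Fintype.card V : ℤ) := by exact_mod_cast h5
  linarith

lemma bip_critical_iff (hXuY : X ∪ Y = Set.univ) (hXiY : X ∩ Y = ∅)
    (hX : IsIndep G X) (hY : IsIndep G Y) {J : Set V} :
    IsCriticalIndep G J ↔
      IsIndep G J ∧ diffSet G J = 2 * (indepNum G : ℤ) - Fintype.card V := by
  obtain ⟨S₀, hS₀, -⟩ := aux_exists_maxIndep G
  have hd₀ : diffSet G S₀ = 2 * (indepNum G : ℤ) - Fintype.card V := aux_maxIndep_diff G hS₀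
  constructor
  · rintro ⟨h1, h2⟩
    refine ⟨h1, le_antisymm (bip_diff_le G X Y hXuY hXiY hX hY h1) ?_⟩
    rw [← hd₀]
    exact h2 S₀ hS₀.1
  · rintro ⟨h1, h2⟩
    refine ⟨h1, fun J' hJ' => ?_⟩
    rw [h2]
    exact bip_diff_le G X Y hXuY hXiY hX hY hJ'

lemma bip_critical_subset_max (hXuY : X ∪ Y = Set.univ) (hXiY : X ∩ Y = ∅)
    (hX : IsIndep G X) (hY : IsIndep G Y) {J : Set V} (hJ : IsCriticalIndep G J) :
    ∃ S : Set V, IsMaxIndep G S ∧ J ⊆ S := by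
  have hd : diffSet G J = 2 * (indepNum G : ℤ) - Fintype.card V :=
    ((bip_critical_iff G X Y hXuY hXiY hX hY).mp hJ).2
  have hJind := hJ.1
  have hYuX : Y ∪ X = Set.univ := by rw [Set.union_comm]; exact hXuY
  have hYiX : Y ∩ X = ∅ := by rw [Set.inter_comm]; exact hXiY
  refine ⟨(Y \ nbhdSet G J) ∪ (J ∩ X), ?_, ?_⟩
  · rw [aux_maxIndep_iff]
    refine ⟨bip_K_indep G Y X hYuX hY hJind, ?_⟩
    -- cardinality equals indepNum
    have h1 := bip_half G X Y hXuY hXiY hX hJind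
    have hc2 := bip_K_card G Y X hYiX J
    have h2le : (((Y \ nbhdSet G J) ∪ (J ∩ X)).ncard : ℤ) ≤ (indepNum G : ℤ) := by
      exact_mod_cast aux_ncard_le_indepNum G (bip_K_indep G Y X hYuX hY hJind)
    have h3 : (nbhdSet G J ∩ X).ncard + (nbhdSet G J ∩ Y).ncard = (nbhdSet G J).ncard :=
      bip_part_ncard X Y _ hXuY hXiY
    have h4 : (J ∩ X).ncard + (J ∩ Y).ncard = J.ncard := bip_part_ncard X Y _ hXuY hXiY
    have h5 := bip_card_XY X Y hXuY hXiY
    have h3' : ((nbhdSet G J ∩ X).ncard : ℤ) + ((nbhdSet G J ∩ Y).ncard : ℤ)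
        = ((nbhdSet G J).ncard : ℤ) := by exact_mod_cast h3
    have h4' : ((J ∩ X).ncard : ℤ) + ((J ∩ Y).ncard : ℤ) = (J.ncard : ℤ) := by
      exact_mod_cast h4
    have h5' : (X.ncard : ℤ) + (Y.ncard : ℤ) = (Fintype.card V : ℤ) := by exact_mod_cast h5
    have hNYX : (nbhdSet G J ∩ Y).ncard = (nbhdSet G J ∩ Y).ncard := rfl
    unfold diffSet at hd
    have : (((Y \ nbhdSet G J) ∪ (J ∩ X)).ncard : ℤ) = (indepNum G : ℤ) := by
      rw [hc2]
      rw [hc2] at h2le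
      linarith
    exact_mod_cast this
  · intro v hv
    have : v ∈ X ∪ Y := hXuY ▸ Set.mem_univ v
    rcases this with hvX | hvY
    · exact Or.inr ⟨hv, hvX⟩
    · refine Or.inl ⟨hvY, fun hn => ?_⟩
      obtain ⟨u, hu, hadj⟩ := hn
      exact hJind hu hv hadj

lemma bip_maxcrit_iff (hXuY : X ∪ Y = Set.univ) (hXiY : X ∩ Y = ∅)
    (hX : IsIndep G X) (hY : IsIndep G Y) {I : Set V} :
    IsMaxCriticalIndep G I ↔ IsMaxIndep G I := by
  have hmaxcrit : ∀ S : Set V, IsMaxIndep G S → IsCriticalIndep G S := by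
    intro S hS
    rw [bip_critical_iff G X Y hXuY hXiY hX hY]
    exact ⟨hS.1, aux_maxIndep_diff G hS⟩
  constructor
  · rintro ⟨hcrit, hmax⟩
    obtain ⟨S₀, hS₀, -⟩ := aux_exists_maxIndep G
    refine ⟨hcrit.1, fun T hT => ?_⟩
    exact le_trans (hS₀.2 T hT) (hmax S₀ (hmaxcrit S₀ hS₀))
  · intro hS
    exact ⟨hmaxcrit I hS, fun J hJ => hS.2 J hJ.1⟩

lemma bip_nucleus_eq_core (hXuY : X ∪ Y = Set.univ) (hXiY : X ∩ Y = ∅)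
    (hX : IsIndep G X) (hY : IsIndep G Y) : nucleusSet G = coreSet G := by
  have h : {S : Set V | IsMaxCriticalIndep G S} = {S : Set V | IsMaxIndep G S} :=
    Set.ext fun S => bip_maxcrit_iff G X Y hXuY hXiY hX hY
  unfold nucleusSet coreSet
  rw [h]

lemma bip_diadem_eq_corona (hXuY : X ∪ Y = Set.univ) (hXiY : X ∩ Y = ∅)
    (hX : IsIndep G X) (hY : IsIndep G Y) : diademSet G = coronaSet G := by
  ext v
  constructor
  · rintro ⟨J, hJ, hv⟩
    obtain ⟨S, hS, hJS⟩ := bip_critical_subset_max G X Y hXuY hXiY hX hY hJ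
    exact ⟨S, hS, hJS hv⟩
  · rintro ⟨S, hS, hv⟩
    refine ⟨S, ?_, hv⟩
    rw [Set.mem_setOf_eq] at hS ⊢
    rw [bip_critical_iff G X Y hXuY hXiY hX hY]
    exact ⟨hS.1, aux_maxIndep_diff G hS⟩

end Bip


/-- For every finite simple bipartite graph `G`,
`|corona(G)| + |core(G)| = 2·α(G)` and `|nucleus(G)| + |diadem(G)| = 2·α(G)`. -/
theorem bipartite_corona_core_nucleus_diadem (G : SimpleGraph V)
    (hbip : ∃ X Y : Set V, X ∪ Y = Set.univ ∧ X ∩ Y = ∅ ∧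
      IsIndep G X ∧ IsIndep G Y) :
    (coronaSet G).ncard + (coreSet G).ncard = 2 * indepNum G ∧
    (nucleusSet G).ncard + (diademSet G).ncard = 2 * indepNum G := by
  obtain ⟨X, Y, hXuY, hXiY, hX, hY⟩ := hbip
  have h1 := bip_corona_core G X Y hXuY hXiY hX hY
  refine ⟨h1, ?_⟩
  rw [bip_nucleus_eq_core G X Y hXuY hXiY hX hY,
    bip_diadem_eq_corona G X Y hXuY hXiY hX hY]
  omega
end

section
/- Let G be a finite simple graph, let I_c be a critical independent set of G, and let I_1^M and I_2^M be maximum independent sets of G. Set A_i = I_c \ I_i^M and B_i = N(I_c) ∩ I_i^M for i = 1, 2. Then |A_1 ∩ A_2| = |B_1 ∩ B_2|. -/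
variable {V : Type*} [Fintype V] [DecidableEq V]

/-- Key Hall-type counting inequality for critical independent sets: every subset
`S` of `N(I_c)` has at least `|S|` neighbours inside `I_c`. -/
lemma hall_condition_of_critical (G : SimpleGraph V) (Ic : Set V)
    (hIc : IsCriticalIndep G Ic) (S : Set V) (hS : S ⊆ nbhdSet G Ic) :
    S.ncard ≤ (Ic ∩ nbhdSet G S).ncard := by
  set J : Set V := Ic \ nbhdSet G S with hJ
  have hJind : IsIndep G J := fun u hu v hv => hIc.1 hu.1 hv.1
  have hNJ : nbhdSet G J ⊆ nbhdSet G Ic \ S := by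
    rintro v ⟨u, hu, huv⟩
    exact ⟨⟨u, hu.1, huv⟩, fun hvS => hu.2 ⟨v, hvS, huv.symm⟩⟩
  have hd := hIc.2 J hJind
  unfold diffSet at hd
  have h1 : (Ic ∩ nbhdSet G S).ncard + J.ncard = Ic.ncard :=
    Set.ncard_inter_add_ncard_diff_eq_ncard Ic (nbhdSet G S)
  have h2 : (nbhdSet G J).ncard ≤ (nbhdSet G Ic \ S).ncard :=
    Set.ncard_le_ncard hNJ (Set.toFinite _)
  have h3 : (nbhdSet G Ic \ S).ncard + S.ncard = (nbhdSet G Ic).ncard :=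
    Set.ncard_diff_add_ncard_of_subset hS
  omega

/-- A matching saturating `N(I_c)` into `I_c`, for `I_c` a critical independent set. -/
lemma exists_matching_of_critical (G : SimpleGraph V) (Ic : Set V)
    (hIc : IsCriticalIndep G Ic) :
    ∃ f : V → V, Set.InjOn f (nbhdSet G Ic) ∧
      ∀ b ∈ nbhdSet G Ic, f b ∈ Ic ∧ G.Adj (f b) b := by
  classical
  set N : Set V := nbhdSet G Ic with hN
  let t : N → Finset V := fun b => Finset.univ.filter (fun c => c ∈ Ic ∧ G.Adj c (b : V))
  have hall : ∀ s : Finset N, s.card ≤ (s.biUnion t).card := by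
    intro s
    set S : Set V := Subtype.val '' (↑s : Set N) with hSdef
    have hSsub : S ⊆ N := by rintro v ⟨b, _, rfl⟩; exact b.2
    have hcard : S.ncard = s.card := by
      rw [hSdef, Set.ncard_image_of_injOn (Subtype.val_injective.injOn),
        Set.ncard_coe_finset]
    have hsub : Ic ∩ nbhdSet G S ⊆ ↑(s.biUnion t) := by
      rintro v ⟨hvIc, u, ⟨b, hbs, rfl⟩, huv⟩
      simp only [Finset.coe_biUnion, Set.mem_iUnion, Finset.mem_coe]
      exact ⟨b, hbs, by simp [t, hvIc, huv.symm]⟩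
    calc s.card = S.ncard := hcard.symm
      _ ≤ (Ic ∩ nbhdSet G S).ncard := hall_condition_of_critical G Ic hIc S hSsub
      _ ≤ (↑(s.biUnion t) : Set V).ncard := Set.ncard_le_ncard hsub (Set.toFinite _)
      _ = (s.biUnion t).card := Set.ncard_coe_finset _
  obtain ⟨f0, hf0inj, hf0⟩ := (Finset.all_card_le_biUnion_card_iff_exists_injective t).mp hall
  refine ⟨fun v => if h : v ∈ N then f0 ⟨v, h⟩ else v, ?_, ?_⟩
  · intro a ha b hb hab
    simp only [dif_pos ha, dif_pos hb] at hab
    exact congrArg Subtype.val (hf0inj hab)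
  · intro b hb
    simp only [dif_pos hb]
    have := hf0 ⟨b, hb⟩
    simp only [t, Finset.mem_filter] at this
    exact this.2

/-- The swap inequality: `|I_c \ I| ≤ |N(I_c) ∩ I|` for a maximum independent set `I`. -/
lemma swap_card_le (G : SimpleGraph V) (Ic I : Set V) (hIcInd : IsIndep G Ic)
    (hI : IsMaxIndep G I) : (Ic \ I).ncard ≤ (nbhdSet G Ic ∩ I).ncard := by
  set N : Set V := nbhdSet G Ic with hN
  have hIcN : ∀ v ∈ Ic, v ∉ N := by
    rintro v hv ⟨u, hu, huv⟩
    exact hIcInd hu hv huv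
  have hT : IsIndep G (Ic ∪ (I \ N)) := by
    rintro u (hu | hu) v (hv | hv) hadj
    · exact hIcInd hu hv hadj
    · exact hv.2 ⟨u, hu, hadj⟩
    · exact hu.2 ⟨v, hv, hadj.symm⟩
    · exact hI.1 hu.1 hv.1 hadj
  have hle := hI.2 _ hT
  have c1 : (Ic ∪ (I \ N)).ncard + (Ic ∩ (I \ N)).ncard = Ic.ncard + (I \ N).ncard :=
    Set.ncard_union_add_ncard_inter _ _
  have c3 : Ic ∩ (I \ N) = Ic ∩ I := by
    ext v
    exact ⟨fun h => ⟨h.1, h.2.1⟩, fun h => ⟨h.1, h.2, hIcN v h.1⟩⟩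
  have c2 : (I ∩ N).ncard + (I \ N).ncard = I.ncard :=
    Set.ncard_inter_add_ncard_diff_eq_ncard I N
  have c4 : (Ic ∩ I).ncard + (Ic \ I).ncard = Ic.ncard :=
    Set.ncard_inter_add_ncard_diff_eq_ncard Ic I
  rw [c3] at c1
  rw [Set.inter_comm] at c2
  omega

/-- Let `I_c` be a critical independent set of `G` and let
`I_1^M, I_2^M` be maximum independent sets of `G`. With `A_i = I_c \ I_i^M` and
`B_i = N(I_c) ∩ I_i^M`, we have `|A_1 ∩ A_2| = |B_1 ∩ B_2|`. -/
theorem critical_two_max_inter_card (G : SimpleGraph V) (Ic I1 I2 : Set V)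
    (hIc : IsCriticalIndep G Ic) (hI1 : IsMaxIndep G I1) (hI2 : IsMaxIndep G I2) :
    ((Ic \ I1) ∩ (Ic \ I2)).ncard =
      ((nbhdSet G Ic ∩ I1) ∩ (nbhdSet G Ic ∩ I2)).ncard := by
  obtain ⟨f, hfinj, hf⟩ := exists_matching_of_critical G Ic hIc
  set N : Set V := nbhdSet G Ic with hN
  set A1 : Set V := Ic \ I1
  set A2 : Set V := Ic \ I2
  set B1 : Set V := N ∩ I1
  set B2 : Set V := N ∩ I2
  have hmap : ∀ (I : Set V), IsMaxIndep G I → ∀ b ∈ N, b ∈ I → f b ∉ I := by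
    intro I hI b hb hbI hfbI
    exact hI.1 hfbI hbI (hf b hb).2
  have hBAcap : (B1 ∩ B2).ncard ≤ (A1 ∩ A2).ncard := by
    apply Set.ncard_le_ncard_of_injOn f
    · rintro b ⟨⟨hbN, hb1⟩, ⟨_, hb2⟩⟩
      exact ⟨⟨(hf b hbN).1, hmap I1 hI1 b hbN hb1⟩, ⟨(hf b hbN).1, hmap I2 hI2 b hbN hb2⟩⟩
    · exact hfinj.mono (fun b hb => hb.1.1)
  have hBAcup : (B1 ∪ B2).ncard ≤ (A1 ∪ A2).ncard := by
    apply Set.ncard_le_ncard_of_injOn f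
    · rintro b (⟨hbN, hb1⟩ | ⟨hbN, hb2⟩)
      · exact Or.inl ⟨(hf b hbN).1, hmap I1 hI1 b hbN hb1⟩
      · exact Or.inr ⟨(hf b hbN).1, hmap I2 hI2 b hbN hb2⟩
    · exact hfinj.mono (by rintro b (hb | hb) <;> exact hb.1)
  have hA1 : A1.ncard ≤ B1.ncard := swap_card_le G Ic I1 hIc.1 hI1
  have hA2 : A2.ncard ≤ B2.ncard := swap_card_le G Ic I2 hIc.1 hI2
  have eA : (A1 ∪ A2).ncard + (A1 ∩ A2).ncard = A1.ncard + A2.ncard :=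
    Set.ncard_union_add_ncard_inter _ _
  have eB : (B1 ∪ B2).ncard + (B1 ∩ B2).ncard = B1.ncard + B2.ncard :=
    Set.ncard_union_add_ncard_inter _ _
  omega
end

section
/- For every finite simple graph G, nucleus(G) ⊆ diadem(G) being bounded as in |nucleus(G)| + |diadem(G)| ≤ 2·α(G) implies in particular |diadem(G)| ≤ 2·α(G) − |nucleus(G)|; more precisely, if I_1, …, I_m enumerate all maximum-cardinality critical independent sets of G, then |⋃_{j=1}^m I_j| ≤ 2·α(G) − |⋂_{j=1}^m I_j|. -/
variable {V : Type*} [Fintype V] [DecidableEq V]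

/-!
For a nonempty family of critical independent sets, enlarge a member `M` to a critical
independent set `W ⊇ M` of maximal size. For any critical independent `S`, the set
`W ∪ (S \ N(W))` is again critical, so maximality gives `S ⊆ W ∪ N(W)`. Criticality of `W` is
Hall's condition for matching `N(W)` into `W`; a vertex of `N(W)` lying in a member of the family
has its neighbours in `W` outside the intersection `K` of the family. Hence
`|⋃| ≤ |W| + |W \ K| ≤ 2α(G) - |K|`. For the diadem: if `M` is a maximum critical independent
set and `C` is critical, then `C ∪ (M \ N(C))` is again a maximum one.
-/

section Neighbourhood

omit [Fintype V] [DecidableEq V]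

variable {G : SimpleGraph V}

lemma nbhdSet_mono {X Y : Set V} (h : X ⊆ Y) : nbhdSet G X ⊆ nbhdSet G Y :=
  fun _ ⟨u, hu, huv⟩ => ⟨u, h hu, huv⟩

lemma nbhdSet_union (X Y : Set V) : nbhdSet G (X ∪ Y) = nbhdSet G X ∪ nbhdSet G Y := by
  ext v
  simp only [nbhdSet, Set.mem_union, Set.mem_ofPred_eq, or_and_right, exists_or]

lemma IsIndep.mono {A B : Set V} (hB : IsIndep G B) (h : A ⊆ B) : IsIndep G A :=
  fun _ hu _ hv => hB (h hu) (h hv)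

lemma IsIndep.union_sdiff_nbhdSet {A B : Set V} (hA : IsIndep G A) (hB : IsIndep G B) :
    IsIndep G (A ∪ (B \ nbhdSet G A)) := by
  rintro u (hu | hu) v (hv | hv) huv
  · exact hA hu hv huv
  · exact hv.2 ⟨u, hu, huv⟩
  · exact hu.2 ⟨v, hv, huv.symm⟩
  · exact hB hu.1 hv.1 huv

end Neighbourhood

section Critical

omit [DecidableEq V]

variable {G : SimpleGraph V}

lemma diffSet_supermodular (X Y : Set V) :
    diffSet G X + diffSet G Y ≤ diffSet G (X ∪ Y) + diffSet G (X ∩ Y) := by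
  have hN : nbhdSet G (X ∩ Y) ⊆ nbhdSet G X ∩ nbhdSet G Y :=
    Set.subset_inter (nbhdSet_mono Set.inter_subset_left) (nbhdSet_mono Set.inter_subset_right)
  have := Set.ncard_union_add_ncard_inter X Y
  have := Set.ncard_union_add_ncard_inter (nbhdSet G X) (nbhdSet G Y)
  have := Set.ncard_le_ncard hN
  simp only [diffSet, nbhdSet_union]
  omega

lemma IsIndep.ncard_le_indepNum {S : Set V} (hS : IsIndep G S) : S.ncard ≤ indepNum G := by
  refine le_csSup ⟨Nat.card V, ?_⟩ ⟨S, hS, rfl⟩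
  rintro n ⟨T, -, rfl⟩
  exact Set.ncard_le_card T

/-- Hall's condition for matching `N(W)` into `W`. -/
lemma IsCriticalIndep.ncard_le_ncard_inter_nbhdSet {W T : Set V} (hW : IsCriticalIndep G W)
    (hT : T ⊆ nbhdSet G W) : T.ncard ≤ (W ∩ nbhdSet G T).ncard := by
  have hsub : nbhdSet G (W \ nbhdSet G T) ⊆ nbhdSet G W \ T :=
    fun v ⟨a, ⟨haW, haT⟩, hav⟩ => ⟨⟨a, haW, hav⟩, fun hvT => haT ⟨v, hvT, hav.symm⟩⟩
  have hcrit := hW.2 (W \ nbhdSet G T) (hW.1.mono Set.sdiff_subset)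
  have := Set.ncard_inter_add_ncard_sdiff_eq_ncard W (nbhdSet G T)
  have := Set.ncard_le_ncard hsub
  have := Set.ncard_sdiff_add_ncard_of_subset hT
  simp only [diffSet] at hcrit
  omega

lemma IsCriticalIndep.ncard_inter_nbhdSet_le_ncard_sdiff {W T K : Set V}
    (hW : IsCriticalIndep G W) (hTK : ∀ x ∈ T, ∀ y ∈ K, ¬ G.Adj x y) :
    (T ∩ nbhdSet G W).ncard ≤ (W \ K).ncard :=
  (hW.ncard_le_ncard_inter_nbhdSet Set.inter_subset_right).trans <| Set.ncard_le_ncard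
    fun _ ⟨hyW, x, hx, hxy⟩ => ⟨hyW, fun hyK => hTK x hx.1 _ hyK hxy⟩

lemma IsCriticalIndep.sdiff_nbhdSet {A B : Set V} (hA : IsCriticalIndep G A)
    (hB : IsCriticalIndep G B) : IsCriticalIndep G (B \ nbhdSet G A) := by
  have hsub : A ∩ nbhdSet G (B ∩ nbhdSet G A) ⊆ nbhdSet G B \ nbhdSet G (B \ nbhdSet G A) :=
    fun a ⟨haA, r, hr, hra⟩ => ⟨⟨r, hr.1, hra⟩, fun ⟨_, hj, hja⟩ => hj.2 ⟨a, haA, hja.symm⟩⟩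
  have := hA.ncard_le_ncard_inter_nbhdSet (T := B ∩ nbhdSet G A) Set.inter_subset_right
  have := Set.ncard_le_ncard hsub
  have := Set.ncard_sdiff_add_ncard_of_subset (nbhdSet_mono (G := G) (Set.sdiff_subset : B \ nbhdSet G A ⊆ B))
  have := Set.ncard_inter_add_ncard_sdiff_eq_ncard B (nbhdSet G A)
  have hd : diffSet G B ≤ diffSet G (B \ nbhdSet G A) := by
    simp only [diffSet]
    omega
  exact ⟨hB.1.mono Set.sdiff_subset, fun K hK => (hB.2 K hK).trans hd⟩

lemma IsCriticalIndep.union_sdiff_nbhdSet {A B : Set V} (hA : IsCriticalIndep G A)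
    (hB : IsCriticalIndep G B) : IsCriticalIndep G (A ∪ (B \ nbhdSet G A)) := by
  have hJ := hA.sdiff_nbhdSet hB
  have := diffSet_supermodular (G := G) A (B \ nbhdSet G A)
  have := hA.2 (A ∩ (B \ nbhdSet G A)) (hA.1.mono Set.inter_subset_left)
  exact ⟨hA.1.union_sdiff_nbhdSet hB.1, fun K hK => (hJ.2 K hK).trans (by linarith)⟩

lemma IsMaxCriticalIndep.union_sdiff_nbhdSet {M C : Set V} (hM : IsMaxCriticalIndep G M)
    (hC : IsCriticalIndep G C) : IsMaxCriticalIndep G (C ∪ (M \ nbhdSet G C)) := by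
  refine ⟨hC.union_sdiff_nbhdSet hM.1, fun J hJ => (hM.2 J hJ).trans ?_⟩
  have := hC.ncard_inter_nbhdSet_le_ncard_sdiff fun x hx y hy => hM.1.1 hx hy
  have := Set.ncard_inter_add_ncard_sdiff_eq_ncard M (nbhdSet G C)
  have := Set.ncard_union_eq (Set.disjoint_sdiff_left.mono_right Set.sdiff_subset :
    Disjoint (C \ M) (M \ nbhdSet G C))
  have := Set.ncard_le_ncard (Set.union_subset_union_left (M \ nbhdSet G C)
    (Set.sdiff_subset : C \ M ⊆ C))
  omega

lemma diademSet_subset_sUnion_isMaxCriticalIndep {M : Set V} (hM : IsMaxCriticalIndep G M) :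
    diademSet G ⊆ ⋃₀ {S | IsMaxCriticalIndep G S} :=
  fun _ ⟨_, hC, hx⟩ => ⟨_, hM.union_sdiff_nbhdSet hC, Or.inl hx⟩

lemma IsCriticalIndep.exists_superset_dominating {M : Set V} (hM : IsCriticalIndep G M) :
    ∃ W, IsCriticalIndep G W ∧ M ⊆ W ∧ ∀ S, IsCriticalIndep G S → S ⊆ W ∪ nbhdSet G W := by
  obtain ⟨W, ⟨hW, hMW⟩, hmax⟩ := (Set.toFinite {S | IsCriticalIndep G S ∧ M ⊆ S}).exists_maximalFor
    Set.ncard _ ⟨M, hM, subset_rfl⟩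
  refine ⟨W, hW, hMW, fun S hS x hxS => ?_⟩
  by_cases hxN : x ∈ nbhdSet G W
  · exact Or.inr hxN
  have hle := hmax ⟨hW.union_sdiff_nbhdSet hS, hMW.trans Set.subset_union_left⟩
    (Set.ncard_le_ncard Set.subset_union_left)
  rw [Set.eq_of_subset_of_ncard_le Set.subset_union_left hle]
  exact Or.inl (Or.inr ⟨hxS, hxN⟩)

theorem ncard_sUnion_add_ncard_sInter_le {𝓕 : Set (Set V)} (hne : 𝓕.Nonempty)
    (h𝓕 : ∀ S ∈ 𝓕, IsCriticalIndep G S) :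
    (⋃₀ 𝓕).ncard + (⋂₀ 𝓕).ncard ≤ 2 * indepNum G := by
  obtain ⟨M, hM⟩ := hne
  obtain ⟨W, hW, hMW, hdom⟩ := (h𝓕 M hM).exists_superset_dominating
  have hKW : ⋂₀ 𝓕 ⊆ W := (Set.sInter_subset_of_mem hM).trans hMW
  have hcover : ⋃₀ 𝓕 ⊆ W ∪ (⋃₀ 𝓕 ∩ nbhdSet G W) := fun x ⟨S, hS, hxS⟩ =>
    (hdom S (h𝓕 S hS) hxS).imp_right fun hxN => ⟨⟨S, hS, hxS⟩, hxN⟩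
  have := hW.ncard_inter_nbhdSet_le_ncard_sdiff (T := ⋃₀ 𝓕) (K := ⋂₀ 𝓕)
    fun x ⟨S, hS, hxS⟩ y hy => (h𝓕 S hS).1 hxS (hy S hS)
  have := Set.ncard_sdiff_add_ncard_of_subset hKW
  have := (Set.ncard_le_ncard hcover).trans (Set.ncard_union_le _ _)
  have := hW.1.ncard_le_indepNum
  omega

end Critical

theorem diadem_le_two_alpha_sub_nucleus_general (G : SimpleGraph V)
    (m : ℕ) (hm : 1 ≤ m) (I : Fin m → Set V)
    (hI : ∀ j, IsMaxCriticalIndep G (I j)) :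
    nucleusSet G ⊆ diademSet G ∧
    ((diademSet G).ncard : ℤ) ≤ 2 * (indepNum G : ℤ) - (nucleusSet G).ncard ∧
    (((⋃ j, I j).ncard : ℤ) ≤ 2 * (indepNum G : ℤ) - (⋂ j, I j).ncard) := by
  have hM := hI ⟨0, hm⟩
  refine ⟨(Set.sInter_subset_of_mem hM).trans (Set.subset_sUnion_of_mem hM.1), ?_, ?_⟩
  · have := ncard_sUnion_add_ncard_sInter_le (𝓕 := {S | IsMaxCriticalIndep G S}) ⟨_, hM⟩
      fun S hS => hS.1
    have := Set.ncard_le_ncard (diademSet_subset_sUnion_isMaxCriticalIndep hM)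
    unfold nucleusSet
    omega
  · have := ncard_sUnion_add_ncard_sInter_le (𝓕 := Set.range I) ⟨_, ⟨0, hm⟩, rfl⟩
      (Set.forall_mem_range.2 fun j => (hI j).1)
    rw [Set.sUnion_range, Set.sInter_range] at this
    omega

/-- For every finite simple graph `G`, `nucleus(G) ⊆ diadem(G)`
and `|diadem(G)| ≤ 2·α(G) − |nucleus(G)|`; more precisely, if `I_1, …, I_m`
enumerate all maximum-cardinality critical independent sets of `G`, then
`|⋃ j, I_j| ≤ 2·α(G) − |⋂ j, I_j|`. -/
theorem diadem_le_two_alpha_sub_nucleus (G : SimpleGraph V)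
    (m : ℕ) (hm : 1 ≤ m) (I : Fin m → Set V)
    (hI : ∀ j, IsMaxCriticalIndep G (I j))
    (henum : ∀ S : Set V, IsMaxCriticalIndep G S → ∃ j, S = I j) :
    nucleusSet G ⊆ diademSet G ∧
    ((diademSet G).ncard : ℤ) ≤ 2 * (indepNum G : ℤ) - (nucleusSet G).ncard ∧
    (((⋃ j, I j).ncard : ℤ) ≤ 2 * (indepNum G : ℤ) - (⋂ j, I j).ncard) :=
  diadem_le_two_alpha_sub_nucleus_general G m hm I hI
end
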